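/- Let Δ > 0, ε₁, ε₂ > 0, T ∈ ℝ, and let a, b be real sequences with |a_i − b_i| ≤ Δ for all i that are monotonic (a_i ≥ b_i for all i or a_i ≤ b_i for all i). Let P_a(k) (respectively P_b(k)) be the probability, under independent noise v₀ drawn from the exponential distribution of scale Δ/ε₁ and v₁, …, v_k each drawn from the exponential distribution of scale Δ/ε₂, of the event {a_i + v_i < T + v₀ for all 1 ≤ i ≤ k−1, and a_k + v_k ≥ T + v₀} (with b in place of a for P_b(k)). Then for all k, k' ≥ 1: P_a(k)·P_b(k') ≤ exp(ε₁ + 2ε₂)·P_b(k)·P_a(k'). (AboveThreshold with exponential noise on monotonic queries is (ε₁+2ε₂)-range-bounded.) -/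

import Mathlib

open MeasureTheory Real

/-- The exponential distribution with scale `b`: density `z ↦ (1/b)·exp(−z/b)` for `z ≥ 0`
(and `0` for `z < 0`) with respect to Lebesgue measure. -/
noncomputable def expDist (b : ℝ) : Measure ℝ :=
  volume.withDensity fun z =>
    ENNReal.ofReal (if 0 ≤ z then (1 / b) * Real.exp (-(z / b)) else 0)

/-- The event that `AboveThreshold` with threshold `T` and query values `a 1, a 2, …` halts
exactly at query `k`: coordinates `v 0, v 1, …, v k` are the noise on the threshold and on
queries `1, …, k`. -/
def haltEvent (T : ℝ) (a : ℕ → ℝ) (k : ℕ) : Set (Fin (k + 1) → ℝ) :=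
  {v | (∀ i : Fin (k + 1), 1 ≤ (i : ℕ) → (i : ℕ) < k → a i + v i < T + v 0) ∧
       T + v 0 ≤ a k + v (Fin.last k)}

open scoped ENNReal

lemma lintegral_pi_prod : ∀ {n : ℕ} (μ : Fin n → Measure ℝ), (∀ i, SigmaFinite (μ i)) →
    ∀ (g : Fin n → ℝ → ℝ≥0∞), (∀ i, Measurable (g i)) →
    ∫⁻ x, ∏ i, g i (x i) ∂(Measure.pi μ) = ∏ i, ∫⁻ z, g i z ∂(μ i) := by
  intro n
  induction n with
  | zero =>
    intro μ _ g _
    simp [lintegral_const, Measure.pi_univ]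
  | succ n ih =>
    intro μ hμ g hg
    haveI := hμ
    rw [← ((measurePreserving_piFinSuccAbove μ 0).symm).lintegral_comp_emb
      (MeasurableEquiv.measurableEmbedding _)]
    simp_rw [MeasurableEquiv.piFinSuccAbove_symm_apply, Fin.insertNthEquiv,
      Fin.prod_univ_succ, Fin.insertNth_zero]
    simp only [Fin.zero_succAbove, Function.comp_def, Fin.cons_zero, Fin.cons_succ,
      Equiv.coe_fn_mk, cast_eq]
    have h2 : Measurable fun (y : Fin n → ℝ) => ∏ j : Fin n, g j.succ (y j) :=
      Finset.measurable_prod _ (fun j _ => (hg j.succ).comp (measurable_pi_apply j))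
    rw [lintegral_prod_mul (hg 0).aemeasurable h2.aemeasurable,
      ih _ (fun i => hμ _) _ (fun i => hg _)]

lemma pi_withDensity {n : ℕ} (f : Fin n → ℝ → ℝ≥0∞) (hf : ∀ i, Measurable (f i))
    (hsf : ∀ i, SigmaFinite ((volume : Measure ℝ).withDensity (f i))) :
    Measure.pi (fun i => (volume : Measure ℝ).withDensity (f i)) =
      (Measure.pi fun _ : Fin n => (volume : Measure ℝ)).withDensity
        (fun x => ∏ i, f i (x i)) := by
  haveI := hsf
  refine Measure.pi_eq fun s hs => ?_
  rw [withDensity_apply _ (MeasurableSet.univ_pi hs),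
    ← lintegral_indicator (MeasurableSet.univ_pi hs)]
  have key : ∀ x : Fin n → ℝ, (Set.univ.pi s).indicator (fun x => ∏ i, f i (x i)) x
      = ∏ i, (s i).indicator (f i) (x i) := by
    intro x
    by_cases hx : x ∈ Set.univ.pi s
    · rw [Set.indicator_of_mem hx]
      exact Finset.prod_congr rfl fun i _ =>
        (Set.indicator_of_mem (hx i (Set.mem_univ i)) _).symm
    · rw [Set.indicator_of_notMem hx]
      rw [Set.mem_univ_pi] at hx
      push_neg at hx
      obtain ⟨i, hi⟩ := hx
      exact (Finset.prod_eq_zero (Finset.mem_univ i)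
        (Set.indicator_of_notMem hi _)).symm
  simp_rw [key]
  rw [lintegral_pi_prod _ (fun i => inferInstance) _
    (fun i => (hf i).indicator (hs i))]
  exact Finset.prod_congr rfl fun i _ => by
    rw [lintegral_indicator (hs i), ← withDensity_apply _ (hs i)]

noncomputable def expD (b : ℝ) : ℝ → ℝ≥0∞ :=
  fun z => ENNReal.ofReal (if 0 ≤ z then (1 / b) * Real.exp (-(z / b)) else 0)

lemma expDist_eq (b : ℝ) : expDist b = volume.withDensity (expD b) := rfl

lemma expD_measurable (b : ℝ) : Measurable (expD b) := by
  apply Measurable.ennreal_ofReal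
  exact Measurable.ite measurableSet_Ici (by fun_prop) measurable_const

instance expDist_sigmaFinite (b : ℝ) : SigmaFinite (expDist b) := by
  unfold expDist
  exact SigmaFinite.withDensity_ofReal _

lemma expD_shift {b c : ℝ} (hb : 0 < b) (hc : 0 ≤ c) (y : ℝ) :
    expD b (y - c) ≤ ENNReal.ofReal (Real.exp (c / b)) * expD b y := by
  unfold expD
  by_cases h : 0 ≤ y - c
  · have hy : 0 ≤ y := le_trans hc (by linarith)
    rw [if_pos h, if_pos hy, ← ENNReal.ofReal_mul (Real.exp_nonneg _)]
    apply ENNReal.ofReal_le_ofReal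
    rw [show Real.exp (c / b) * (1 / b * Real.exp (-(y / b)))
        = 1 / b * (Real.exp (c / b) * Real.exp (-(y / b))) by ring,
      ← Real.exp_add]
    have : -((y - c) / b) = c / b + -(y / b) := by field_simp; ring
    rw [this]
  · rw [if_neg h]
    simp

lemma shift_le {n : ℕ} (β c : Fin n → ℝ) (hβ : ∀ i, 0 < β i) (hc : ∀ i, 0 ≤ c i)
    {E F : Set (Fin n → ℝ)} (hF : MeasurableSet F)
    (hEF : ∀ v ∈ E, (fun i => v i + c i) ∈ F) :
    Measure.pi (fun i => expDist (β i)) E ≤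
      ENNReal.ofReal (Real.exp (∑ i, c i / β i)) *
        Measure.pi (fun i => expDist (β i)) F := by
  have hφm : Measurable (fun v : Fin n → ℝ => fun i => v i + c i) :=
    measurable_pi_lambda _ fun i => (measurable_pi_apply i).add_const _
  have hpre : MeasurableSet ((fun v : Fin n → ℝ => fun i => v i + c i) ⁻¹' F) :=
    hφm hF
  have hsub : E ⊆ (fun v : Fin n → ℝ => fun i => v i + c i) ⁻¹' F := hEF
  calc Measure.pi (fun i => expDist (β i)) E
      ≤ Measure.pi (fun i => expDist (β i))
        ((fun v : Fin n → ℝ => fun i => v i + c i) ⁻¹' F) := measure_mono hsub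
    _ ≤ ENNReal.ofReal (Real.exp (∑ i, c i / β i)) *
        Measure.pi (fun i => expDist (β i)) F := ?_
  simp_rw [expDist_eq]
  rw [pi_withDensity _ (fun i => expD_measurable _) (fun i => by
    unfold expD; exact SigmaFinite.withDensity_ofReal _)]
  have hFvol : Measurable fun x : Fin n → ℝ => ∏ i, expD (β i) (x i) :=
    Finset.measurable_prod _ fun i _ => (expD_measurable _).comp (measurable_pi_apply i)
  rw [withDensity_apply _ hpre, withDensity_apply _ hF]
  -- change of variables: translation
  have hvol : (Measure.pi fun _ : Fin n => (volume : Measure ℝ)) = volume := volume_pi.symm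
  rw [hvol]
  have hmp : MeasurePreserving (fun v : Fin n → ℝ => v + c) volume volume :=
    measurePreserving_add_right volume c
  have hemb : MeasurableEmbedding (fun v : Fin n → ℝ => v + c) :=
    (MeasurableEquiv.addRight c).measurableEmbedding
  have hchg := hmp.setLIntegral_comp_emb hemb
    (fun y => ∏ i, expD (β i) (y i - c i)) ((fun v : Fin n → ℝ => v + c) ⁻¹' F)
  rw [Set.image_preimage_eq F (fun y => ⟨y - c, by simp⟩ : Function.Surjective (fun v : Fin n → ℝ => v + c))] at hchg
  have heq : (fun v : Fin n → ℝ => fun i => v i + c i) = (fun v : Fin n → ℝ => v + c) := rfl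
  rw [heq]
  have : ∀ x : Fin n → ℝ, (∏ i, expD (β i) ((x + c) i - c i)) = ∏ i, expD (β i) (x i) := by
    intro x
    exact Finset.prod_congr rfl fun i _ => by simp
  calc ∫⁻ x in (fun v : Fin n → ℝ => v + c) ⁻¹' F, ∏ i, expD (β i) (x i) ∂volume
      = ∫⁻ x in (fun v : Fin n → ℝ => v + c) ⁻¹' F,
          (fun y => ∏ i, expD (β i) (y i - c i)) ((fun v => v + c) x) ∂volume := by
        refine setLIntegral_congr_fun (hmp.measurable hF) ?_
        exact fun x _ => (this x).symm
    _ = ∫⁻ y in F, ∏ i, expD (β i) (y i - c i) ∂volume := hchg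
    _ ≤ ∫⁻ y in F, ENNReal.ofReal (Real.exp (∑ i, c i / β i)) * ∏ i, expD (β i) (y i) ∂volume := by
        refine setLIntegral_mono' hF fun y _ => ?_
        calc ∏ i, expD (β i) (y i - c i)
            ≤ ∏ i, (ENNReal.ofReal (Real.exp (c i / β i)) * expD (β i) (y i)) :=
              Finset.prod_le_prod' fun i _ => expD_shift (hβ i) (hc i) _
          _ = (∏ i, ENNReal.ofReal (Real.exp (c i / β i))) * ∏ i, expD (β i) (y i) :=
              Finset.prod_mul_distrib
          _ = ENNReal.ofReal (Real.exp (∑ i, c i / β i)) * ∏ i, expD (β i) (y i) := by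
              rw [← ENNReal.ofReal_prod_of_nonneg (fun i _ => Real.exp_nonneg _),
                ← Real.exp_sum]
    _ = ENNReal.ofReal (Real.exp (∑ i, c i / β i)) * ∫⁻ y in F, ∏ i, expD (β i) (y i) ∂volume :=
        lintegral_const_mul _ hFvol

lemma haltEvent_measurable (T : ℝ) (a : ℕ → ℝ) (k : ℕ) :
    MeasurableSet (haltEvent T a k) := by
  have : haltEvent T a k =
      (⋂ i : Fin (k + 1), {v : Fin (k + 1) → ℝ |
        1 ≤ (i : ℕ) → (i : ℕ) < k → a i + v i < T + v 0}) ∩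
      {v : Fin (k + 1) → ℝ | T + v 0 ≤ a k + v (Fin.last k)} := by
    ext v; simp [haltEvent, Set.mem_iInter]
  rw [this]
  refine MeasurableSet.inter (MeasurableSet.iInter fun i => ?_) ?_
  · by_cases h1 : 1 ≤ (i : ℕ)
    · by_cases h2 : (i : ℕ) < k
      · simp only [h1, h2, forall_true_left]
        exact measurableSet_lt (measurable_const.add (measurable_pi_apply i))
          (measurable_const.add (measurable_pi_apply 0))
      · simp only [h2]
        convert MeasurableSet.univ using 1
        ext v; simp [h2]
    · convert MeasurableSet.univ using 1
      ext v; simp [h1]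
  · exact measurableSet_le (measurable_const.add (measurable_pi_apply 0))
      (measurable_const.add (measurable_pi_apply (Fin.last k)))

lemma measure_conv (k : ℕ) (x y : ℝ) :
    (fun i : Fin (k+1) => if i = 0 then expDist x else expDist y) =
      fun i : Fin (k+1) => expDist (if i = 0 then x else y) := by
  funext i; exact (apply_ite expDist _ _ _).symm

lemma last_ne_zero {k : ℕ} (hk : 1 ≤ k) : (Fin.last k) ≠ (0 : Fin (k+1)) := by
  intro h
  have := congrArg Fin.val h
  simp at this
  omega

lemma key1 (Δ ε₁ ε₂ T : ℝ) (hΔ : 0 < Δ) (hε₁ : 0 < ε₁) (hε₂ : 0 < ε₂)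
    (a b : ℕ → ℝ) (hab : ∀ i, b i ≤ a i) (hd : ∀ i, a i - b i ≤ Δ)
    (k : ℕ) (hk : 1 ≤ k) :
    Measure.pi (fun i : Fin (k+1) => if i = 0 then expDist (Δ/ε₁) else expDist (Δ/ε₂))
        (haltEvent T a k)
      ≤ ENNReal.ofReal (Real.exp ε₂) *
        Measure.pi (fun i : Fin (k+1) => if i = 0 then expDist (Δ/ε₁) else expDist (Δ/ε₂))
          (haltEvent T b k) := by
  rw [measure_conv]
  set β : Fin (k+1) → ℝ := fun i => if i = 0 then Δ/ε₁ else Δ/ε₂ with hβdef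
  set c : Fin (k+1) → ℝ := fun i => if i = Fin.last k then Δ else 0 with hcdef
  have hsum : ∑ i, c i / β i = ε₂ := by
    rw [Finset.sum_eq_single (Fin.last k)]
    · simp only [hcdef, hβdef, if_pos rfl, if_neg (last_ne_zero hk)]
      field_simp
    · intro i _ hi
      simp [hcdef, hi]
    · simp
  have h := shift_le β c
    (fun i => by
      by_cases h : i = 0
      · simpa [hβdef, h] using div_pos hΔ hε₁
      · simpa [hβdef, h] using div_pos hΔ hε₂)
    (fun i => by by_cases h : i = Fin.last k <;> simp [hcdef, h, le_of_lt hΔ])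
    (E := haltEvent T a k) (F := haltEvent T b k)
    (haltEvent_measurable T b k) ?_
  · rwa [hsum] at h
  · intro v hv
    obtain ⟨h1, h2⟩ := hv
    constructor
    · intro i hi1 hi2
      have hi0 : i ≠ 0 := by
        intro h; rw [h] at hi1; simp at hi1
      have hil : i ≠ Fin.last k := by
        intro h; rw [h] at hi2; simp at hi2
      have hc0 : c 0 = 0 := by simp [hcdef, (last_ne_zero hk).symm]
      have hci : c i = 0 := by simp [hcdef, hil]
      simp only [hci, hc0, add_zero]
      have := h1 i hi1 hi2
      have := hab i
      linarith
    · have hcl : c (Fin.last k) = Δ := by simp [hcdef]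
      have hc0 : c 0 = 0 := by simp [hcdef, (last_ne_zero hk).symm]
      simp only [hcl, hc0, add_zero]
      have := hd k
      linarith

lemma key2 (Δ ε₁ ε₂ T : ℝ) (hΔ : 0 < Δ) (hε₁ : 0 < ε₁) (hε₂ : 0 < ε₂)
    (a b : ℕ → ℝ) (hab : ∀ i, b i ≤ a i) (hd : ∀ i, a i - b i ≤ Δ)
    (k : ℕ) (hk : 1 ≤ k) :
    Measure.pi (fun i : Fin (k+1) => if i = 0 then expDist (Δ/ε₁) else expDist (Δ/ε₂))
        (haltEvent T b k)
      ≤ ENNReal.ofReal (Real.exp (ε₁ + ε₂)) *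
        Measure.pi (fun i : Fin (k+1) => if i = 0 then expDist (Δ/ε₁) else expDist (Δ/ε₂))
          (haltEvent T a k) := by
  rw [measure_conv]
  set β : Fin (k+1) → ℝ := fun i => if i = 0 then Δ/ε₁ else Δ/ε₂ with hβdef
  set c : Fin (k+1) → ℝ :=
    fun i => (if i = 0 then Δ else 0) + (if i = Fin.last k then Δ else 0) with hcdef
  have hsum : ∑ i, c i / β i = ε₁ + ε₂ := by
    have : ∀ i, c i / β i = (if i = 0 then Δ else 0) / β i +
        (if i = Fin.last k then Δ else 0) / β i := fun i => add_div _ _ _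
    simp_rw [this]
    rw [Finset.sum_add_distrib]
    congr 1
    · rw [Finset.sum_eq_single (0 : Fin (k+1))]
      · simp only [hβdef, if_pos rfl]; field_simp; simp
      · intro i _ hi; simp [hi]
      · simp
    · rw [Finset.sum_eq_single (Fin.last k)]
      · simp only [hβdef, if_pos rfl, if_neg (last_ne_zero hk)]; field_simp; simp
      · intro i _ hi; simp [hi]
      · simp
  have h := shift_le β c
    (fun i => by
      by_cases h : i = 0
      · simpa [hβdef, h] using div_pos hΔ hε₁
      · simpa [hβdef, h] using div_pos hΔ hε₂)
    (fun i => by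
      have : (0:ℝ) ≤ (if i = 0 then Δ else 0) := by positivity
      have : (0:ℝ) ≤ (if i = Fin.last k then Δ else 0) := by positivity
      simp only [hcdef]; positivity)
    (E := haltEvent T b k) (F := haltEvent T a k)
    (haltEvent_measurable T a k) ?_
  · rwa [hsum] at h
  · intro v hv
    obtain ⟨h1, h2⟩ := hv
    have hc0 : c 0 = Δ := by
      simp [hcdef, (last_ne_zero hk).symm]
    have hcl : c (Fin.last k) = Δ := by
      simp [hcdef, last_ne_zero hk]
    constructor
    · intro i hi1 hi2
      have hi0 : i ≠ 0 := by
        intro h; rw [h] at hi1; simp at hi1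
      have hil : i ≠ Fin.last k := by
        intro h; rw [h] at hi2; simp at hi2
      have hci : c i = 0 := by simp [hcdef, hil, hi0]
      simp only [hci, hc0, add_zero]
      have := h1 i hi1 hi2
      have := hd i
      linarith
    · simp only [hcl, hc0]
      have := hab k
      linarith

lemma combine {x y : ℝ} {A B C D : ℝ≥0∞} (h1 : A ≤ ENNReal.ofReal (Real.exp x) * C)
    (h2 : B ≤ ENNReal.ofReal (Real.exp y) * D) :
    A * B ≤ ENNReal.ofReal (Real.exp (x + y)) * (C * D) := by
  calc A * B ≤ (ENNReal.ofReal (Real.exp x) * C) * (ENNReal.ofReal (Real.exp y) * D) :=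
      mul_le_mul' h1 h2
    _ = (ENNReal.ofReal (Real.exp x) * ENNReal.ofReal (Real.exp y)) * (C * D) :=
      mul_mul_mul_comm _ _ _ _
    _ = ENNReal.ofReal (Real.exp (x + y)) * (C * D) := by
      rw [← ENNReal.ofReal_mul (Real.exp_nonneg _), ← Real.exp_add]

/-- `AboveThreshold` with exponential noise on monotonic sensitivity-`Δ` queries is
`(ε₁+2ε₂)`-range-bounded: `P_a(k)·P_b(k') ≤ exp(ε₁+2ε₂)·P_b(k)·P_a(k')`. -/
theorem expo_aboveThreshold_range_bounded (Δ ε₁ ε₂ T : ℝ) (hΔ : 0 < Δ) (hε₁ : 0 < ε₁)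
    (hε₂ : 0 < ε₂) (a b : ℕ → ℝ) (hsens : ∀ i : ℕ, |a i - b i| ≤ Δ)
    (hmono : (∀ i : ℕ, b i ≤ a i) ∨ (∀ i : ℕ, a i ≤ b i)) :
    ∀ k k' : ℕ, 1 ≤ k → 1 ≤ k' →
      Measure.pi (fun i : Fin (k + 1) => if i = 0 then expDist (Δ / ε₁) else expDist (Δ / ε₂))
          (haltEvent T a k) *
        Measure.pi
          (fun i : Fin (k' + 1) => if i = 0 then expDist (Δ / ε₁) else expDist (Δ / ε₂))
          (haltEvent T b k') ≤
      ENNReal.ofReal (Real.exp (ε₁ + 2 * ε₂)) *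
        (Measure.pi
            (fun i : Fin (k + 1) => if i = 0 then expDist (Δ / ε₁) else expDist (Δ / ε₂))
            (haltEvent T b k) *
          Measure.pi
            (fun i : Fin (k' + 1) => if i = 0 then expDist (Δ / ε₁) else expDist (Δ / ε₂))
            (haltEvent T a k')) := by
  intro k k' hk hk'
  rcases hmono with h | h
  · have hd : ∀ i, a i - b i ≤ Δ := fun i => (le_abs_self _).trans (hsens i)
    have H1 := key1 Δ ε₁ ε₂ T hΔ hε₁ hε₂ a b h hd k hk
    have H2 := key2 Δ ε₁ ε₂ T hΔ hε₁ hε₂ a b h hd k' hk'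
    have := combine H1 H2
    rwa [show ε₂ + (ε₁ + ε₂) = ε₁ + 2 * ε₂ by ring] at this
  · have hd : ∀ i, b i - a i ≤ Δ := fun i => by
      have := hsens i; rw [abs_sub_comm] at this; exact (le_abs_self _).trans this
    have H1 := key2 Δ ε₁ ε₂ T hΔ hε₁ hε₂ b a h hd k hk
    have H2 := key1 Δ ε₁ ε₂ T hΔ hε₁ hε₂ b a h hd k' hk'
    have := combine H1 H2
    rwa [show ε₁ + ε₂ + ε₂ = ε₁ + 2 * ε₂ by ring] at this
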